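/- arXiv:1410.5410 — 3 statements merged into one kernel-verified Lean document; each statement's English description precedes it below -/
import Mathlib

section
/- For any z with 0 < z < 1, the second derivative of f(z) = z/\sqrt{a + z^b} is nonpositive when a = m/4 and b = 2^{m+1} for a positive integer m ≥ 1; that is, f is concave on (0,1). -/
/-!
Writing `s = √(a + z^n)`, one computes `f' = (a + (1 - n/2) z^n) / s^3` and
`f'' = n z^(n-1) ((n-2)/4 · z^n - (n+1)/2 · a) / s^5`. For `0 < z < 1` we have `z^n ≤ 1`, so the
bracket is nonpositive as soon as `n - 2 ≤ 2 (n+1) a`; for `n = 2^(m+1)` and `a = m/4` this is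
the elementary inequality `2^(m+2) ≤ m (2^(m+1) + 1) + 4`.
-/

open Real Set Filter Topology

section DivSqrtAddPow

variable {a : ℝ} {n : ℕ} {z : ℝ}

theorem hasDerivAt_sqrt_add_pow (h : 0 < a + z ^ n) :
    HasDerivAt (fun x => √(a + x ^ n)) (n * z ^ (n - 1) / (2 * √(a + z ^ n))) z :=
  ((hasDerivAt_pow n z).const_add a).sqrt h.ne'

theorem hasDerivAt_div_sqrt_add_pow (h : 0 < a + z ^ n) :
    HasDerivAt (fun x => x / √(a + x ^ n))
      ((a + (1 - n / 2) * z ^ n) / √(a + z ^ n) ^ 3) z := by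
  refine ((hasDerivAt_id z).div (hasDerivAt_sqrt_add_pow h) (sqrt_pos.2 h).ne').congr_deriv ?_
  have hsq : √(a + z ^ n) ^ 2 = a + z ^ n := sq_sqrt h.le
  have hpow : (n : ℝ) * (z * z ^ (n - 1)) = n * z ^ n := by
    rcases Nat.eq_zero_or_pos n with rfl | hn
    · simp
    · rw [← pow_succ', Nat.sub_add_cancel hn]
  have hs0 := (sqrt_pos.2 h).ne'
  simp only [id]
  field_simp
  linear_combination 2 * hsq - hpow

theorem hasDerivAt_add_mul_pow_div_sqrt_add_pow_pow_three (h : 0 < a + z ^ n) :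
    HasDerivAt (fun x => (a + (1 - n / 2) * x ^ n) / √(a + x ^ n) ^ 3)
      (n * z ^ (n - 1) * ((n - 2) / 4 * z ^ n - (n + 1) / 2 * a) / √(a + z ^ n) ^ 5) z := by
  have hnum := ((hasDerivAt_pow n z).const_mul (1 - n / 2 : ℝ)).const_add a
  refine (hnum.div ((hasDerivAt_sqrt_add_pow h).pow 3)
    (pow_ne_zero 3 (sqrt_pos.2 h).ne')).congr_deriv ?_
  have hsq : √(a + z ^ n) ^ 2 = a + z ^ n := sq_sqrt h.le
  have hs0 := (sqrt_pos.2 h).ne'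
  simp only [Pi.pow_apply]
  push_cast
  field_simp
  linear_combination (8 * n * (2 - n) * z ^ (n - 1)) * hsq

theorem hasDerivAt_deriv_div_sqrt_add_pow (ha : 0 ≤ a) (hz : 0 < z) :
    HasDerivAt (deriv fun x => x / √(a + x ^ n))
      (n * z ^ (n - 1) * ((n - 2) / 4 * z ^ n - (n + 1) / 2 * a) / √(a + z ^ n) ^ 5) z := by
  have hpos : ∀ x, 0 < x → 0 < a + x ^ n := fun x hx =>
    add_pos_of_nonneg_of_pos ha (pow_pos hx n)
  have hderiv : (deriv fun x => x / √(a + x ^ n)) =ᶠ[𝓝 z]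
      fun x => (a + (1 - n / 2) * x ^ n) / √(a + x ^ n) ^ 3 :=
    eventually_of_mem (Ioi_mem_nhds hz) fun x hx => (hasDerivAt_div_sqrt_add_pow (hpos x hx)).deriv
  exact (hasDerivAt_add_mul_pow_div_sqrt_add_pow_pow_three (hpos z hz)).congr_of_eventuallyEq
    hderiv

theorem deriv_deriv_div_sqrt_add_pow_nonpos (ha : 0 ≤ a) (hn : 2 ≤ n)
    (hna : (n - 2 : ℝ) ≤ 2 * (n + 1) * a) (hz : z ∈ Ioo 0 1) :
    deriv (deriv fun x => x / √(a + x ^ n)) z ≤ 0 := by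
  obtain ⟨hz0, hz1⟩ := hz
  rw [(hasDerivAt_deriv_div_sqrt_add_pow ha hz0).deriv]
  have hn2 : (0 : ℝ) ≤ n - 2 := by
    rw [sub_nonneg]
    exact_mod_cast hn
  have hzn : z ^ n ≤ 1 := pow_le_one₀ hz0.le hz1.le
  have hfactor : (n - 2) / 4 * z ^ n - (n + 1) / 2 * a ≤ 0 := by
    nlinarith [mul_le_mul_of_nonneg_left hzn hn2]
  have hpos : 0 ≤ (n : ℝ) * z ^ (n - 1) := by positivity
  exact div_nonpos_of_nonpos_of_nonneg (mul_nonpos_of_nonneg_of_nonpos hpos hfactor)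
    (by positivity)

theorem concaveOn_Ioo_div_sqrt_add_pow (ha : 0 ≤ a) (hn : 2 ≤ n)
    (hna : (n - 2 : ℝ) ≤ 2 * (n + 1) * a) :
    ConcaveOn ℝ (Ioo 0 1) fun x => x / √(a + x ^ n) := by
  refine concaveOn_of_deriv2_nonpos' (convex_Ioo 0 1) (fun z hz => ?_) (fun z hz => ?_)
    fun z hz => deriv_deriv_div_sqrt_add_pow_nonpos ha hn hna hz
  · have hpos : 0 < a + z ^ n := add_pos_of_nonneg_of_pos ha (pow_pos hz.1 n)
    exact (hasDerivAt_div_sqrt_add_pow hpos).differentiableAt.differentiableWithinAt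
  · exact (hasDerivAt_deriv_div_sqrt_add_pow ha hz.1).differentiableAt.differentiableWithinAt

end DivSqrtAddPow

theorem two_mul_two_pow_succ_le (m : ℕ) : 2 * 2 ^ (m + 1) ≤ m * (2 ^ (m + 1) + 1) + 4 := by
  rcases m with _ | _ | m
  · norm_num
  · norm_num
  · have : 2 * 2 ^ (m + 3) ≤ (m + 2) * 2 ^ (m + 3) := Nat.mul_le_mul_right _ (by omega)
    nlinarith

theorem sign_alsh_concave_general (m : ℕ) (a : ℝ) (ha : a = m / 4)
    (f : ℝ → ℝ) (hf : ∀ z : ℝ, f z = z / Real.sqrt (a + z ^ (2 ^ (m + 1)))) :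
    (∀ z ∈ Set.Ioo (0 : ℝ) 1, deriv (deriv f) z ≤ 0) ∧
    ConcaveOn ℝ (Set.Ioo (0 : ℝ) 1) f := by
  obtain rfl : f = fun z => z / √(a + z ^ 2 ^ (m + 1)) := funext hf
  have ha0 : 0 ≤ a := by rw [ha]; positivity
  have hn : 2 ≤ 2 ^ (m + 1) := Nat.le_self_pow (by omega) 2
  have hna : ((2 ^ (m + 1) : ℕ) - 2 : ℝ) ≤ 2 * ((2 ^ (m + 1) : ℕ) + 1) * a := by
    have := two_mul_two_pow_succ_le m
    rw [ha]
    rify at this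
    push_cast
    linarith
  exact ⟨fun z hz => deriv_deriv_div_sqrt_add_pow_nonpos ha0 hn hna hz,
    concaveOn_Ioo_div_sqrt_add_pow ha0 hn hna⟩

/-- For `0 < z < 1`, the second derivative of `f(z) = z/√(a + z^b)` is nonpositive
when `a = m/4` and `b = 2^(m+1)` for a positive integer `m`; i.e., `f` is concave
on `(0,1)`. -/
theorem sign_alsh_concave (m : ℕ) (hm : 1 ≤ m) (a : ℝ) (ha : a = m / 4)
    (f : ℝ → ℝ) (hf : ∀ z : ℝ, f z = z / Real.sqrt (a + z ^ (2 ^ (m + 1)))) :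
    (∀ z ∈ Set.Ioo (0 : ℝ) 1, deriv (deriv f) z ≤ 0) ∧
    ConcaveOn ℝ (Set.Ioo (0 : ℝ) 1) f :=
  sign_alsh_concave_general m a ha f hf
end

section
/- Let Q(q) = [q; 0; …; 0] ∈ ℝ^{D+m} (appending m zeros) and P(x) = [x; 1/2 - ‖x‖²; …; 1/2 - ‖x‖^{2^m}]. If ‖q‖ = 1, then the cosine similarity satisfies ⟨Q(q), P(x)⟩/(‖Q(q)‖·‖P(x)‖) = ⟨q, x⟩/\sqrt{m/4 + ‖x‖^{2^{m+1}}}. -/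
open Real RealInnerProductSpace

/-- Sign-ALSH preprocessing transformation. -/
noncomputable def signALSH_P (m D : ℕ) (x : EuclideanSpace ℝ (Fin D)) :
    EuclideanSpace ℝ (Fin (D + m)) :=
  WithLp.toLp 2 fun j => if h : (j : ℕ) < D then x ⟨j, h⟩
    else 1 / 2 - ‖x‖ ^ (2 ^ ((j : ℕ) - D + 1))

/-- Sign-ALSH query transformation: append `m` zeros. -/
noncomputable def signALSH_Q (m D : ℕ) (q : EuclideanSpace ℝ (Fin D)) :
    EuclideanSpace ℝ (Fin (D + m)) :=
  WithLp.toLp 2 fun j => if h : (j : ℕ) < D then q ⟨j, h⟩ else 0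

/-! Since `‖Q(q)‖ = ‖q‖ = 1` and `⟨Q(q), P(x)⟩ = ⟨q, x⟩`, everything reduces to computing `‖P(x)‖²`.
With `s_i = ‖x‖^(2^i)` we have `(1/2 - s_i)² = 1/4 - s_i + s_{i+1}`, so the squares of the
appended coordinates telescope to `m/4 - ‖x‖² + ‖x‖^(2^(m+1))`, and the `‖x‖²` cancels against
the first `D` coordinates. -/

theorem sum_range_sq_half_sub_pow_two_pow (t : ℝ) (m : ℕ) :
    ∑ i ∈ Finset.range m, (1 / 2 - t ^ 2 ^ (i + 1)) ^ 2 = m / 4 - t ^ 2 + t ^ 2 ^ (m + 1) := by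
  induction m with
  | zero => simp
  | succ n ih =>
    have hsq : (t ^ 2 ^ (n + 1)) ^ 2 = t ^ 2 ^ (n + 2) := by rw [← pow_mul, ← pow_succ]
    rw [Finset.sum_range_succ, ih]
    push_cast
    linear_combination hsq

namespace EuclideanSpace

variable {𝕜 : Type*} [RCLike 𝕜] {n m : ℕ}

theorem inner_eq_sum_castAdd_add_sum_natAdd (u v : EuclideanSpace 𝕜 (Fin (n + m))) :
    inner 𝕜 u v = ∑ i : Fin n, inner 𝕜 (u (Fin.castAdd m i)) (v (Fin.castAdd m i))
      + ∑ i : Fin m, inner 𝕜 (u (Fin.natAdd n i)) (v (Fin.natAdd n i)) := by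
  rw [PiLp.inner_apply, Fin.sum_univ_add]

theorem norm_sq_eq_sum_castAdd_add_sum_natAdd (u : EuclideanSpace 𝕜 (Fin (n + m))) :
    ‖u‖ ^ 2 = ∑ i : Fin n, ‖u (Fin.castAdd m i)‖ ^ 2 + ∑ i : Fin m, ‖u (Fin.natAdd n i)‖ ^ 2 := by
  rw [EuclideanSpace.norm_sq_eq, Fin.sum_univ_add]

end EuclideanSpace

section signALSH

variable {m D : ℕ}

@[simp]
theorem signALSH_Q_castAdd (q : EuclideanSpace ℝ (Fin D)) (i : Fin D) :
    signALSH_Q m D q (Fin.castAdd m i) = q i := by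
  simp [signALSH_Q]

@[simp]
theorem signALSH_Q_natAdd (q : EuclideanSpace ℝ (Fin D)) (i : Fin m) :
    signALSH_Q m D q (Fin.natAdd D i) = 0 := by
  simp [signALSH_Q]

@[simp]
theorem signALSH_P_castAdd (x : EuclideanSpace ℝ (Fin D)) (i : Fin D) :
    signALSH_P m D x (Fin.castAdd m i) = x i := by
  simp [signALSH_P]

@[simp]
theorem signALSH_P_natAdd (x : EuclideanSpace ℝ (Fin D)) (i : Fin m) :
    signALSH_P m D x (Fin.natAdd D i) = 1 / 2 - ‖x‖ ^ 2 ^ ((i : ℕ) + 1) := by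
  simp [signALSH_P]

theorem inner_signALSH_Q_signALSH_P (q x : EuclideanSpace ℝ (Fin D)) :
    ⟪signALSH_Q m D q, signALSH_P m D x⟫ = ⟪q, x⟫ := by
  rw [EuclideanSpace.inner_eq_sum_castAdd_add_sum_natAdd, PiLp.inner_apply]
  simp

theorem norm_signALSH_Q (q : EuclideanSpace ℝ (Fin D)) : ‖signALSH_Q m D q‖ = ‖q‖ := by
  rw [← sq_eq_sq₀ (norm_nonneg _) (norm_nonneg _),
    EuclideanSpace.norm_sq_eq_sum_castAdd_add_sum_natAdd, EuclideanSpace.norm_sq_eq]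
  simp

theorem norm_sq_signALSH_P (x : EuclideanSpace ℝ (Fin D)) :
    ‖signALSH_P m D x‖ ^ 2 = m / 4 + ‖x‖ ^ 2 ^ (m + 1) := by
  have hx : ∑ i : Fin D, x i ^ 2 = ‖x‖ ^ 2 := (EuclideanSpace.real_norm_sq_eq x).symm
  rw [EuclideanSpace.norm_sq_eq_sum_castAdd_add_sum_natAdd]
  simp only [signALSH_P_castAdd, signALSH_P_natAdd, Real.norm_eq_abs, sq_abs]
  rw [hx, Fin.sum_univ_eq_sum_range (fun i => (1 / 2 - ‖x‖ ^ 2 ^ (i + 1)) ^ 2),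
    sum_range_sq_half_sub_pow_two_pow]
  ring

theorem norm_signALSH_P (x : EuclideanSpace ℝ (Fin D)) :
    ‖signALSH_P m D x‖ = √(m / 4 + ‖x‖ ^ 2 ^ (m + 1)) := by
  rw [← norm_sq_signALSH_P, Real.sqrt_sq (norm_nonneg _)]

end signALSH

theorem signALSH_cosine_general (m D : ℕ)
    (q x : EuclideanSpace ℝ (Fin D)) (hq : ‖q‖ = 1) :
    ⟪signALSH_Q m D q, signALSH_P m D x⟫ / (‖signALSH_Q m D q‖ * ‖signALSH_P m D x‖)
      = ⟪q, x⟫ / Real.sqrt (m / 4 + ‖x‖ ^ (2 ^ (m + 1))) := by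
  rw [inner_signALSH_Q_signALSH_P, norm_signALSH_Q, hq, one_mul, norm_signALSH_P]

/-- If `‖q‖ = 1`, the cosine similarity of `Q(q)` and `P(x)` equals
`⟨q,x⟩ / √(m/4 + ‖x‖^(2^(m+1)))`. -/
theorem signALSH_cosine (m D : ℕ) (hm : 1 ≤ m)
    (q x : EuclideanSpace ℝ (Fin D)) (hq : ‖q‖ = 1) :
    ⟪signALSH_Q m D q, signALSH_P m D x⟫ / (‖signALSH_Q m D q‖ * ‖signALSH_P m D x‖)
      = ⟪q, x⟫ / Real.sqrt (m / 4 + ‖x‖ ^ (2 ^ (m + 1))) :=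
  signALSH_cosine_general m D q x hq
end

section
/- Suppose ‖q‖ = 1, ‖x‖ ≤ 1, 0 < ⟨q,x⟩ ≤ cS₀, where c, S₀ > 0. Let z* = (m/2/(2^{m+1}-2))^{1/2^{m+1}} for a positive integer m ≥ 1. Then ⟨q,x⟩/\sqrt{m/4 + ‖x‖^{2^{m+1}}} ≤ min(cS₀, z*)/\sqrt{m/4 + (min(cS₀, z*))^{2^{m+1}}}. -/
/-!
Write `A = m/4`, `2^m = n + 1` and `f z = z / √(A + z ^ (2(n+1)))`. With `u = z²`, `f z ^ 2` is
`u / (A + u ^ (n + 1))`, which increases on `[0, u*]` and is maximal at `u*`, where `n u* ^ (n+1) = A`;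
both facts come from the tangent-line inequality for `u ↦ u ^ n`. The constant `z*` is exactly `√u*`.
Since `⟪q, x⟫ ≤ ‖x‖`, the left side is at most `f ⟪q, x⟫`; if `⟪q, x⟫ ≤ min (c S₀) z*` monotonicity
applies, and otherwise the minimum is `z*` and maximality applies.
-/

open Real RealInnerProductSpace

/-- The tangent-line inequality for `x ↦ x ^ n` at `v`, multiplied by `v` so that no exponent
`n - 1` appears. -/
theorem nat_mul_pow_mul_sub_le_mul_pow_sub_pow {u v : ℝ} (hu : 0 ≤ u) (hv : 0 ≤ v) (n : ℕ) :
    n * v ^ n * (u - v) ≤ v * (u ^ n - v ^ n) := by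
  rcases hv.eq_or_lt with rfl | hv
  · rcases n with _ | n <;> simp
  have bernoulli := one_add_mul_sub_le_pow (a := u / v) (by linarith [div_nonneg hu hv.le]) n
  have hscale : 0 ≤ v ^ (n + 1) := by positivity
  calc (n : ℝ) * v ^ n * (u - v) = v ^ (n + 1) * (1 + n * (u / v - 1)) - v ^ (n + 1) := by
        field_simp; ring
    _ ≤ v ^ (n + 1) * (u / v) ^ n - v ^ (n + 1) := by gcongr
    _ = v * (u ^ n - v ^ n) := by rw [div_pow]; field_simp; ring

-- Cross-multiplied forms of `u / (A + u ^ (n + 1)) ≤ v / (A + v ^ (n + 1))`.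
section MaxOfRatio

variable {A u v : ℝ} {n : ℕ}

theorem mul_add_pow_succ_le_of_le (hu : 0 ≤ u) (huv : u ≤ v) (hA : n * v ^ (n + 1) ≤ A) :
    u * (A + v ^ (n + 1)) ≤ v * (A + u ^ (n + 1)) := by
  have hv : 0 ≤ v := hu.trans huv
  have tangent := nat_mul_pow_mul_sub_le_mul_pow_sub_pow hu hv n
  have hvu : 0 ≤ v - u := sub_nonneg.2 huv
  have hn : (0 : ℝ) ≤ n * v ^ n := by positivity
  simp only [pow_succ] at hA ⊢
  nlinarith [mul_le_mul_of_nonneg_left tangent hu, mul_le_mul_of_nonneg_right huv (mul_nonneg hn hvu),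
    mul_le_mul_of_nonneg_right hA hvu]

theorem mul_add_pow_succ_le_of_eq (hu : 0 ≤ u) (hv : 0 ≤ v) (hA : n * v ^ (n + 1) = A) :
    u * (A + v ^ (n + 1)) ≤ v * (A + u ^ (n + 1)) := by
  have tangent := nat_mul_pow_mul_sub_le_mul_pow_sub_pow hu hv n
  have hn : (0 : ℝ) ≤ n * v ^ n := by positivity
  rw [← hA, pow_succ, pow_succ]
  nlinarith [mul_le_mul_of_nonneg_left tangent hu, mul_nonneg hn (sq_nonneg (u - v))]

end MaxOfRatio

theorem div_sqrt_add_pow_le_of_sq_mul_le {A a b : ℝ} {E : ℕ} (hA : 0 < A) (ha : 0 ≤ a) (hb : 0 ≤ b)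
    (h : a ^ 2 * (A + b ^ E) ≤ b ^ 2 * (A + a ^ E)) :
    a / √(A + a ^ E) ≤ b / √(A + b ^ E) := by
  have hpos : ∀ {c : ℝ}, 0 ≤ c → 0 < √(A + c ^ E) := fun hc => sqrt_pos.2 (by positivity)
  rw [div_le_div_iff₀ (hpos ha) (hpos hb)]
  calc a * √(A + b ^ E) = √(a ^ 2 * (A + b ^ E)) := by rw [sqrt_mul (sq_nonneg a), sqrt_sq ha]
    _ ≤ √(b ^ 2 * (A + a ^ E)) := sqrt_le_sqrt h
    _ = b * √(A + a ^ E) := by rw [sqrt_mul (sq_nonneg b), sqrt_sq hb]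

theorem div_sqrt_add_pow_le {A s z : ℝ} {n : ℕ} (hA : 0 < A) (hs : 0 ≤ s) (hz : 0 ≤ z)
    (h : s ≤ z ∧ n * (z ^ 2) ^ (n + 1) ≤ A ∨ n * (z ^ 2) ^ (n + 1) = A) :
    s / √(A + s ^ (2 * (n + 1))) ≤ z / √(A + z ^ (2 * (n + 1))) := by
  apply div_sqrt_add_pow_le_of_sq_mul_le hA hs hz
  simp only [pow_mul]
  rcases h with ⟨hsz, hle⟩ | heq
  · exact mul_add_pow_succ_le_of_le (sq_nonneg s) (pow_le_pow_left₀ hs hsz 2) hle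
  · exact mul_add_pow_succ_le_of_eq (sq_nonneg s) (sq_nonneg z) heq

theorem nonneg_and_nat_mul_sq_pow_eq_of_eq_rpow {m n : ℕ} (hm : 1 ≤ m) (hn : 2 ^ m = n + 1) {z : ℝ}
    (hz : z = ((m / 2 : ℝ) / (2 ^ (m + 1) - 2)) ^ ((1 : ℝ) / 2 ^ (m + 1))) :
    0 ≤ z ∧ n * (z ^ 2) ^ (n + 1) = m / 4 := by
  have hn_real : (2 : ℝ) ^ m = n + 1 := by exact_mod_cast hn
  have hn_pos : (1 : ℝ) ≤ n := by
    have : (2 : ℝ) ≤ 2 ^ m := by simpa using pow_le_pow_right₀ one_le_two hm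
    linarith
  have hn_ne : (n : ℝ) ≠ 0 := by positivity
  have hbase : (m / 2 : ℝ) / (2 ^ (m + 1) - 2) = m / 4 / n := by
    rw [pow_succ, hn_real, show ((n : ℝ) + 1) * 2 - 2 = 2 * n by ring]
    field_simp
    ring
  have hexp : (1 : ℝ) / 2 ^ (m + 1) = ((2 * (n + 1) : ℕ) : ℝ)⁻¹ := by
    rw [one_div, pow_succ, hn_real]; push_cast; ring
  rw [hbase, hexp] at hz
  refine ⟨hz ▸ rpow_nonneg (by positivity) _, ?_⟩
  rw [← pow_mul, hz, rpow_inv_natCast_pow (by positivity) (by positivity)]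
  exact mul_div_cancel₀ _ hn_ne

theorem signALSH_p2_bound_general {D : ℕ} (q x : EuclideanSpace ℝ (Fin D))
    (c S₀ : ℝ) (m : ℕ) (hm : 1 ≤ m)
    (hq : ‖q‖ = 1)
    (hqx0 : 0 < ⟪q, x⟫) (hqx : ⟪q, x⟫ ≤ c * S₀)
    (zstar : ℝ)
    (hzstar : zstar = ((m / 2 : ℝ) / (2 ^ (m + 1) - 2)) ^ ((1 : ℝ) / 2 ^ (m + 1))) :
    ⟪q, x⟫ / Real.sqrt (m / 4 + ‖x‖ ^ (2 ^ (m + 1)))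
      ≤ min (c * S₀) zstar / Real.sqrt (m / 4 + (min (c * S₀) zstar) ^ (2 ^ (m + 1))) := by
  obtain ⟨n, hn⟩ : ∃ n, 2 ^ m = n + 1 := ⟨2 ^ m - 1, (Nat.sub_add_cancel Nat.one_le_two_pow).symm⟩
  obtain ⟨hz0, hzmax⟩ := nonneg_and_nat_mul_sq_pow_eq_of_eq_rpow hm hn hzstar
  have hA : (0 : ℝ) < m / 4 := div_pos (by exact_mod_cast hm) four_pos
  set t := ⟪q, x⟫
  set w := min (c * S₀) zstar
  have htx : t ≤ ‖x‖ := by simpa [hq] using real_inner_le_norm q x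
  have hw : 0 ≤ w := le_min (hqx0.le.trans hqx) hz0
  rw [pow_succ, hn, mul_comm]
  calc t / √(m / 4 + ‖x‖ ^ (2 * (n + 1))) ≤ t / √(m / 4 + t ^ (2 * (n + 1))) := by
        have := pow_nonneg hqx0.le (2 * (n + 1))
        gcongr
    _ ≤ w / √(m / 4 + w ^ (2 * (n + 1))) := by
        refine div_sqrt_add_pow_le hA hqx0.le hw ?_
        rcases le_or_gt t w with htw | hwt
        · exact Or.inl ⟨htw, hzmax ▸ by gcongr; exact min_le_right _ _⟩
        · have hzc : zstar < c * S₀ := (min_lt_iff.1 (hwt.trans_le hqx)).resolve_left (lt_irrefl _)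
          rw [show w = zstar from min_eq_right hzc.le]
          exact Or.inr hzmax

/-- If `‖q‖ = 1`, `‖x‖ ≤ 1`, `0 < ⟨q,x⟩ ≤ cS₀`, then with
`z* = ((m/2)/(2^(m+1)-2))^(1/2^(m+1))`,
`⟨q,x⟩/√(m/4 + ‖x‖^(2^(m+1))) ≤ min(cS₀,z*)/√(m/4 + min(cS₀,z*)^(2^(m+1)))`. -/
theorem signALSH_p2_bound {D : ℕ} (q x : EuclideanSpace ℝ (Fin D))
    (c S₀ : ℝ) (m : ℕ) (hm : 1 ≤ m)
    (hq : ‖q‖ = 1) (hx : ‖x‖ ≤ 1) (hc : 0 < c) (hS0 : 0 < S₀)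
    (hqx0 : 0 < ⟪q, x⟫) (hqx : ⟪q, x⟫ ≤ c * S₀)
    (zstar : ℝ)
    (hzstar : zstar = ((m / 2 : ℝ) / (2 ^ (m + 1) - 2)) ^ ((1 : ℝ) / 2 ^ (m + 1))) :
    ⟪q, x⟫ / Real.sqrt (m / 4 + ‖x‖ ^ (2 ^ (m + 1)))
      ≤ min (c * S₀) zstar / Real.sqrt (m / 4 + (min (c * S₀) zstar) ^ (2 ^ (m + 1))) :=
  signALSH_p2_bound_general q x c S₀ m hm hq hqx0 hqx zstar hzstar
end
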